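/- Let M ≥ 2, let Λ be a finite set with a probability distribution μ, and let a_i, b_i : Λ → [−1,1] for i = 1,…,M. With E(u,v) = Σ_{λ∈Λ} μ(λ)·u(λ)·v(λ), the chained Bell expression satisfies |Σ_{i=1}^{M} E(a_i, b_i) + Σ_{i=1}^{M−1} E(a_{i+1}, b_i) − E(a_1, b_M)| ≤ 2M − 2. -/
import Mathlib

lemma chsh_aux (p q r s : ℝ) (hp : |p| ≤ 1) (hq : |q| ≤ 1) (hr : |r| ≤ 1) (hs : |s| ≤ 1) :
    |p * r + p * s - q * r + q * s| ≤ 2 := by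
  rw [abs_le] at *
  constructor <;> nlinarith [mul_nonneg (by linarith : (0:ℝ) ≤ 1 - p) (by linarith : (0:ℝ) ≤ 1 - r),
    mul_nonneg (by linarith : (0:ℝ) ≤ 1 + p) (by linarith : (0:ℝ) ≤ 1 + r),
    mul_nonneg (by linarith : (0:ℝ) ≤ 1 - p) (by linarith : (0:ℝ) ≤ 1 + r),
    mul_nonneg (by linarith : (0:ℝ) ≤ 1 + p) (by linarith : (0:ℝ) ≤ 1 - r),
    mul_nonneg (by linarith : (0:ℝ) ≤ 1 - q) (by linarith : (0:ℝ) ≤ 1 - s),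
    mul_nonneg (by linarith : (0:ℝ) ≤ 1 + q) (by linarith : (0:ℝ) ≤ 1 + s),
    mul_nonneg (by linarith : (0:ℝ) ≤ 1 - q) (by linarith : (0:ℝ) ≤ 1 + s),
    mul_nonneg (by linarith : (0:ℝ) ≤ 1 + q) (by linarith : (0:ℝ) ≤ 1 - s),
    mul_nonneg (by linarith : (0:ℝ) ≤ 1 - p) (by linarith : (0:ℝ) ≤ 1 - s),
    mul_nonneg (by linarith : (0:ℝ) ≤ 1 + p) (by linarith : (0:ℝ) ≤ 1 + s),
    mul_nonneg (by linarith : (0:ℝ) ≤ 1 - q) (by linarith : (0:ℝ) ≤ 1 - r),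
    mul_nonneg (by linarith : (0:ℝ) ≤ 1 + q) (by linarith : (0:ℝ) ≤ 1 + r)]

lemma chained_point (M : ℕ) (hM : 2 ≤ M) (x y : ℕ → ℝ)
    (hx : ∀ i, 1 ≤ i → i ≤ M → |x i| ≤ 1)
    (hy : ∀ i, 1 ≤ i → i ≤ M → |y i| ≤ 1) :
    |(∑ i ∈ Finset.Icc 1 M, x i * y i)
        + (∑ i ∈ Finset.Icc 1 (M - 1), x (i + 1) * y i)
        - x 1 * y M| ≤ 2 * M - 2 := by
  induction M, hM using Nat.le_induction with
  | base =>
    rw [show (Finset.Icc 1 2 : Finset ℕ) = {1, 2} from rfl,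
      show (2:ℕ) - 1 = 1 from rfl, show (Finset.Icc 1 1 : Finset ℕ) = {1} from rfl,
      Finset.sum_pair (by norm_num : (1:ℕ) ≠ 2), Finset.sum_singleton]
    have hc := chsh_aux (x 2) (x 1) (y 2) (y 1) (hx 2 (by norm_num) le_rfl)
      (hx 1 (by norm_num) (by norm_num)) (hy 2 (by norm_num) le_rfl)
      (hy 1 (by norm_num) (by norm_num))
    have he : x 1 * y 1 + x 2 * y 2 + x (1 + 1) * y 1 - x 1 * y 2
        = x 2 * y 2 + x 2 * y 1 - x 1 * y 2 + x 1 * y 1 := by norm_num; ring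
    rw [he]
    push_cast
    linarith
  | succ M hM ih =>
    have hx' : ∀ i, 1 ≤ i → i ≤ M → |x i| ≤ 1 := fun i h1 h2 => hx i h1 (by omega)
    have hy' : ∀ i, 1 ≤ i → i ≤ M → |y i| ≤ 1 := fun i h1 h2 => hy i h1 (by omega)
    have h1 : ∑ i ∈ Finset.Icc 1 (M + 1), x i * y i
        = (∑ i ∈ Finset.Icc 1 M, x i * y i) + x (M + 1) * y (M + 1) :=
      Finset.sum_Icc_succ_top (by omega) _
    have h2 : ∑ i ∈ Finset.Icc 1 (M + 1 - 1), x (i + 1) * y i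
        = (∑ i ∈ Finset.Icc 1 (M - 1), x (i + 1) * y i) + x (M + 1) * y M := by
      have e1 : M + 1 - 1 = (M - 1) + 1 := by omega
      rw [e1, Finset.sum_Icc_succ_top (by omega), Nat.sub_add_cancel (by omega : 1 ≤ M)]
    rw [h1, h2]
    have key : (∑ i ∈ Finset.Icc 1 M, x i * y i) + x (M + 1) * y (M + 1)
        + ((∑ i ∈ Finset.Icc 1 (M - 1), x (i + 1) * y i) + x (M + 1) * y M)
        - x 1 * y (M + 1)
        = ((∑ i ∈ Finset.Icc 1 M, x i * y i)
            + (∑ i ∈ Finset.Icc 1 (M - 1), x (i + 1) * y i) - x 1 * y M)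
          + (x (M + 1) * y (M + 1) + x (M + 1) * y M - x 1 * y (M + 1) + x 1 * y M) := by
      ring
    rw [key]
    have hD := chsh_aux (x (M + 1)) (x 1) (y (M + 1)) (y M)
      (hx (M + 1) (by omega) le_rfl) (hx 1 (by omega) (by omega))
      (hy (M + 1) (by omega) le_rfl) (hy M (by omega) (by omega))
    have := ih hx' hy'
    refine le_trans (abs_add_le _ _) ?_
    push_cast at this ⊢
    linarith

/-- the Braunstein–Caves chained Bell inequality with M settings
per side for local-hidden-variable models. -/
theorem chained_bell_inequality (M : ℕ) (hM : 2 ≤ M)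
    (Λ : Type*) [Fintype Λ] (μ : Λ → ℝ)
    (hμ0 : ∀ l, 0 ≤ μ l) (hμ1 : ∑ l, μ l = 1)
    (a b : ℕ → Λ → ℝ)
    (ha : ∀ i, 1 ≤ i → i ≤ M → ∀ l, a i l ∈ Set.Icc (-1 : ℝ) 1)
    (hb : ∀ i, 1 ≤ i → i ≤ M → ∀ l, b i l ∈ Set.Icc (-1 : ℝ) 1)
    (E : (Λ → ℝ) → (Λ → ℝ) → ℝ)
    (hE : ∀ u v, E u v = ∑ l, μ l * u l * v l) :
    |(∑ i ∈ Finset.Icc 1 M, E (a i) (b i))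
        + (∑ i ∈ Finset.Icc 1 (M - 1), E (a (i + 1)) (b i))
        - E (a 1) (b M)| ≤ 2 * M - 2 := by
  have key : (∑ i ∈ Finset.Icc 1 M, E (a i) (b i))
        + (∑ i ∈ Finset.Icc 1 (M - 1), E (a (i + 1)) (b i))
        - E (a 1) (b M)
      = ∑ l, μ l * ((∑ i ∈ Finset.Icc 1 M, a i l * b i l)
          + (∑ i ∈ Finset.Icc 1 (M - 1), a (i + 1) l * b i l)
          - a 1 l * b M l) := by
    simp only [hE, Finset.sum_comm (s := Finset.Icc 1 M),
      Finset.sum_comm (s := Finset.Icc 1 (M - 1))]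
    rw [← Finset.sum_add_distrib, ← Finset.sum_sub_distrib]
    apply Finset.sum_congr rfl
    intro l _
    rw [mul_sub, mul_add, Finset.mul_sum, Finset.mul_sum]
    simp [mul_assoc]
  rw [key]
  calc |∑ l, μ l * _| ≤ ∑ l, |μ l * ((∑ i ∈ Finset.Icc 1 M, a i l * b i l)
          + (∑ i ∈ Finset.Icc 1 (M - 1), a (i + 1) l * b i l)
          - a 1 l * b M l)| := Finset.abs_sum_le_sum_abs _ _
    _ ≤ ∑ l, μ l * (2 * M - 2) := by
        apply Finset.sum_le_sum
        intro l _
        rw [abs_mul, abs_of_nonneg (hμ0 l)]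
        apply mul_le_mul_of_nonneg_left _ (hμ0 l)
        exact chained_point M hM (fun i => a i l) (fun i => b i l)
          (fun i h1 h2 => abs_le.mpr ⟨(ha i h1 h2 l).1, (ha i h1 h2 l).2⟩)
          (fun i h1 h2 => abs_le.mpr ⟨(hb i h1 h2 l).1, (hb i h1 h2 l).2⟩)
    _ = 2 * M - 2 := by rw [← Finset.sum_mul, hμ1, one_mul]
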